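/- arXiv:1008.3197 — 7 statements merged into one kernel-verified Lean document; each statement's English description precedes it below -/
import Mathlib

section
/- Let m ≥ 1 and let μ' and ν be locally finite Borel measures on ℝ^m with μ' absolutely continuous with respect to ν. If y ∈ ℝ^m is a bounded (μ',ν)-density point, then there exist constants 0 < c ≤ C < ∞ and r₀ > 0 such that c·ν(B(y,r)) ≤ μ'(B(y,r)) ≤ C·ν(B(y,r)) for all 0 < r < r₀. -/
open MeasureTheory Filter Metric
open scoped ENNReal

lemma half_le_div_lemma {a b : ℝ≥0∞} (hb : b ≠ ⊤) (h : (1:ℝ≥0∞)/2 ≤ a / b) :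
    b ≤ 2 * a := by
  rcases eq_or_ne b 0 with rfl | hb0
  · simp
  · have := (ENNReal.le_div_iff_mul_le (Or.inl hb0) (Or.inl hb)).mp h
    have h2b : (2:ℝ≥0∞) * (1/2 * b) = b := by
      rw [← mul_assoc, one_div, ENNReal.mul_inv_cancel (by norm_num) (by norm_num), one_mul]
    calc b = 2 * (1/2 * b) := h2b.symm
      _ ≤ 2 * a := by gcongr


/-- `y` is a `μ`-density point of the set `A`:
`μ(B(y,r) ∩ A)/μ(B(y,r)) → 1` as `r → 0⁺`. -/
def IsDensityPoint {m : ℕ} (μ : Measure (EuclideanSpace ℝ (Fin m)))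
    (y : EuclideanSpace ℝ (Fin m)) (A : Set (EuclideanSpace ℝ (Fin m))) : Prop :=
  Tendsto (fun r : ℝ => μ (ball y r ∩ A) / μ (ball y r))
    (nhdsWithin 0 (Set.Ioi 0)) (nhds 1)

/-- `y` is a bounded `(μ', ν)`-density point: for some `N ∈ (0,∞)`, `y` is both a
`ν`- and a `μ'`-density point of the set `{x | 1/N ≤ dμ'/dν (x) ≤ N}`. -/
def IsBoundedDensityPoint {m : ℕ} (μ' ν : Measure (EuclideanSpace ℝ (Fin m)))
    (y : EuclideanSpace ℝ (Fin m)) : Prop :=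
  ∃ N : ℝ, 0 < N ∧
    IsDensityPoint ν y
      {x | ENNReal.ofReal (1 / N) ≤ μ'.rnDeriv ν x ∧ μ'.rnDeriv ν x ≤ ENNReal.ofReal N} ∧
    IsDensityPoint μ' y
      {x | ENNReal.ofReal (1 / N) ≤ μ'.rnDeriv ν x ∧ μ'.rnDeriv ν x ≤ ENNReal.ofReal N}

/-- If `μ' ≪ ν` are locally finite Borel measures on `ℝ^m` and `y` is a bounded
`(μ',ν)`-density point, then there are constants `0 < c ≤ C < ∞` and `r₀ > 0` with
`c·ν(B(y,r)) ≤ μ'(B(y,r)) ≤ C·ν(B(y,r))` for all `0 < r < r₀`. -/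
theorem stmt0 {m : ℕ} (hm : 1 ≤ m) (μ' ν : Measure (EuclideanSpace ℝ (Fin m)))
    [IsLocallyFiniteMeasure μ'] [IsLocallyFiniteMeasure ν]
    (hac : μ' ≪ ν) (y : EuclideanSpace ℝ (Fin m))
    (hy : IsBoundedDensityPoint μ' ν y) :
    ∃ c C : ℝ≥0∞, 0 < c ∧ c ≤ C ∧ C < ⊤ ∧ ∃ r₀ : ℝ, 0 < r₀ ∧
      ∀ r : ℝ, 0 < r → r < r₀ →
        c * ν (ball y r) ≤ μ' (ball y r) ∧ μ' (ball y r) ≤ C * ν (ball y r) := by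
  obtain ⟨N, hN, hν, hμ⟩ := hy
  set J := μ'.rnDeriv ν with hJdef
  set A : Set (EuclideanSpace ℝ (Fin m)) :=
    {x | ENNReal.ofReal (1 / N) ≤ J x ∧ J x ≤ ENNReal.ofReal N} with hAdef
  have hAm : MeasurableSet A := by
    have : A = J ⁻¹' Set.Icc (ENNReal.ofReal (1 / N)) (ENNReal.ofReal N) := rfl
    rw [this]
    exact (μ'.measurable_rnDeriv ν) measurableSet_Icc
  -- extract eventual lower bounds on the density ratios
  have h1 : ∀ᶠ r in nhdsWithin 0 (Set.Ioi 0),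
      (1:ℝ≥0∞)/2 ≤ ν (ball y r ∩ A) / ν (ball y r) :=
    hν.eventually_const_le (by norm_num)
  have h2 : ∀ᶠ r in nhdsWithin 0 (Set.Ioi 0),
      (1:ℝ≥0∞)/2 ≤ μ' (ball y r ∩ A) / μ' (ball y r) :=
    hμ.eventually_const_le (by norm_num)
  obtain ⟨u, hu, huP⟩ := mem_nhdsGT_iff_exists_Ioo_subset.mp (h1.and h2)
  refine ⟨min (ENNReal.ofReal (1 / N) / 2) (2 * ENNReal.ofReal N),
      max (ENNReal.ofReal (1 / N) / 2) (2 * ENNReal.ofReal N), ?_, min_le_max, ?_,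
      u, hu, ?_⟩
  · refine lt_min ?_ ?_
    · refine ENNReal.div_pos (ne_of_gt ?_) (by norm_num)
      simpa using (by positivity : (0:ℝ) < 1 / N)
    · exact ENNReal.mul_pos (by norm_num) (ENNReal.ofReal_pos.mpr hN).ne'
  · exact max_lt (ENNReal.div_lt_top ENNReal.ofReal_ne_top (by norm_num)) (by finiteness)
  · intro r hr hru
    obtain ⟨hb1, hb2⟩ := huP ⟨hr, hru⟩
    set B := ball y r with hBdef
    have hνfin : ν B ≠ ⊤ := measure_ball_lt_top.ne
    have hμfin : μ' B ≠ ⊤ := measure_ball_lt_top.ne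
    -- the RN derivative bounds on `B ∩ A`
    have hint : μ' (B ∩ A) = ∫⁻ x in B ∩ A, J x ∂ν :=
      (Measure.setLIntegral_rnDeriv hac (B ∩ A)).symm
    have hup : μ' (B ∩ A) ≤ ENNReal.ofReal N * ν (B ∩ A) := by
      rw [hint, ← setLIntegral_const (B ∩ A) (ENNReal.ofReal N)]
      exact setLIntegral_mono measurable_const fun x hx => hx.2.2
    have hlo : ENNReal.ofReal (1 / N) * ν (B ∩ A) ≤ μ' (B ∩ A) := by
      rw [hint, ← setLIntegral_const (B ∩ A) (ENNReal.ofReal (1 / N))]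
      exact setLIntegral_mono (μ'.measurable_rnDeriv ν) fun x hx => hx.2.1
    have hν2 : ν B ≤ 2 * ν (B ∩ A) := half_le_div_lemma hνfin hb1
    have hμ2 : μ' B ≤ 2 * μ' (B ∩ A) := half_le_div_lemma hμfin hb2
    constructor
    · calc min (ENNReal.ofReal (1 / N) / 2) (2 * ENNReal.ofReal N) * ν B
          ≤ ENNReal.ofReal (1 / N) / 2 * (2 * ν (B ∩ A)) := by
            gcongr
            exact min_le_left _ _
        _ = ENNReal.ofReal (1 / N) / 2 * 2 * ν (B ∩ A) := by ring
        _ = ENNReal.ofReal (1 / N) * ν (B ∩ A) := by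
            rw [ENNReal.div_mul_cancel (by norm_num) (by norm_num)]
        _ ≤ μ' (B ∩ A) := hlo
        _ ≤ μ' B := measure_mono Set.inter_subset_left
    · calc μ' B ≤ 2 * μ' (B ∩ A) := hμ2
        _ ≤ 2 * (ENNReal.ofReal N * ν (B ∩ A)) := by gcongr
        _ ≤ 2 * ENNReal.ofReal N * ν B := by
            rw [mul_assoc]
            gcongr
            exact Set.inter_subset_left
        _ ≤ max (ENNReal.ofReal (1 / N) / 2) (2 * ENNReal.ofReal N) * ν B := by
            gcongr
            exact le_max_right _ _
end

section
/- Let μ and ν be locally finite Borel measures on ℝ^m and let g: ℝ^m → ℝ^m be a bi-Lipschitz homeomorphism (there exists C ≥ 1 with C⁻¹‖x − z‖ ≤ ‖g(x) − g(z)‖ ≤ C‖x − z‖ for all x, z) such that g_*μ is absolutely continuous with respect to ν. Then for each bounded (g_*μ, ν)-density point y: (1) the upper pointwise dimension of ν at y equals the upper pointwise dimension of μ at g⁻¹(y); (2) the lower pointwise dimension of ν at y equals the lower pointwise dimension of μ at g⁻¹(y). -/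
open MeasureTheory Filter Metric
open scoped ENNReal

/-- Upper pointwise dimension: `limsup_{r→0⁺} log μ(B(x,r)) / log r`. -/
noncomputable def upperPointwiseDim {m : ℕ} (μ : Measure (EuclideanSpace ℝ (Fin m)))
    (x : EuclideanSpace ℝ (Fin m)) : ℝ :=
  limsup (fun r : ℝ => Real.log (μ (ball x r)).toReal / Real.log r)
    (nhdsWithin 0 (Set.Ioi 0))

/-- Lower pointwise dimension: `liminf_{r→0⁺} log μ(B(x,r)) / log r`. -/
noncomputable def lowerPointwiseDim {m : ℕ} (μ : Measure (EuclideanSpace ℝ (Fin m)))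
    (x : EuclideanSpace ℝ (Fin m)) : ℝ :=
  liminf (fun r : ℝ => Real.log (μ (ball x r)).toReal / Real.log r)
    (nhdsWithin 0 (Set.Ioi 0))

/-!
A bi-Lipschitz map moves balls into balls whose radii change by at most the factor `C`, and at a
bounded density point `y` the density of `g_*μ` with respect to `ν` lies in `[1/N, N]` on a set of
density almost one for both measures, so `g_*μ` and `ν` of small balls about `y` agree up to the
factor `2N`. Hence `ν (B(y, r)) ≤ K μ (B(x, Cr))` and `μ (B(x, r)) ≤ K ν (B(y, Cr))` with
`x = g⁻¹ y`. After taking `log · / log r`, the constant contributes `log K / log r → 0` and the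
change of radius a factor `log (Cr) / log r → 1`, and `r ↦ Cr` preserves the filter `𝓝[>] 0`; so
each ratio is eventually at least `(1 + o(1))` times the other one at radius `Cr`, plus `o(1)`,
which forces equal `limsup`s and `liminf`s.
-/

open scoped Topology

theorem map_mulLeft_nhdsGT_zero {a : ℝ} (ha : 0 < a) :
    map (a * ·) (𝓝[>] 0) = 𝓝[>] 0 := by
  conv_lhs => rw [← comap_mulLeft_nhdsGT_zero ha]
  exact map_comap_of_surjective (mul_left_surjective₀ ha.ne') _

theorem Real.sInf_eq_sInf_of_forall_lt_mem {S T : Set ℝ} (hS : BddBelow S) (hT : BddBelow T)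
    (hST : ∀ b ∈ S, ∀ b', b < b' → b' ∈ T) (hTS : ∀ b ∈ T, ∀ b', b < b' → b' ∈ S) :
    sInf S = sInf T := by
  have key : ∀ {S T : Set ℝ}, BddBelow T → (∀ b ∈ S, ∀ b', b < b' → b' ∈ T) → S.Nonempty →
      sInf T ≤ sInf S := fun hT hST hS =>
    le_csInf hS fun b hb =>
      le_of_forall_gt_imp_ge_of_dense fun b' hb' => csInf_le hT (hST b hb b' hb')
  rcases S.eq_empty_or_nonempty with rfl | hSne
  · have : T = ∅ := Set.eq_empty_of_forall_notMem fun b hb => hTS b hb (b + 1) (lt_add_one b)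
    rw [this]
  · have hTne : T.Nonempty := let ⟨b, hb⟩ := hSne; ⟨b + 1, hST b hb _ (lt_add_one b)⟩
    exact le_antisymm (key hS hTS hTne) (key hT hST hSne)

theorem Real.sSup_eq_sSup_of_forall_lt_mem {S T : Set ℝ} (hS : S.Nonempty) (hT : T.Nonempty)
    (hST : ∀ a ∈ S, ∀ a' < a, a' ∈ T) (hTS : ∀ a ∈ T, ∀ a' < a, a' ∈ S) :
    sSup S = sSup T := by
  have bdd : ∀ {S T : Set ℝ}, BddAbove S → (∀ a ∈ T, ∀ a' < a, a' ∈ S) → BddAbove T :=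
    fun ⟨c, hc⟩ hTS =>
      ⟨c, fun a ha => le_of_forall_lt_imp_le_of_dense fun a' ha' => hc (hTS a ha a' ha')⟩
  have key : ∀ {S T : Set ℝ}, BddAbove T → (∀ a ∈ S, ∀ a' < a, a' ∈ T) → S.Nonempty →
      sSup S ≤ sSup T := fun hT hST hS =>
    csSup_le hS fun a ha =>
      le_of_forall_lt_imp_le_of_dense fun a' ha' => le_csSup hT (hST a ha a' ha')
  by_cases hSb : BddAbove S
  · have hTb := bdd hSb hTS
    exact le_antisymm (key hTb hST hS) (key hSb hTS hT)
  · have hTb : ¬ BddAbove T := fun h => hSb (bdd h hST)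
    rw [Real.sSup_of_not_bddAbove hSb, Real.sSup_of_not_bddAbove hTb]

def AsymptoticallyDominates {α : Type*} (l : Filter α) (T : α → α) (A B : α → ℝ) : Prop :=
  ∃ e q : α → ℝ, Tendsto e l (𝓝 0) ∧ Tendsto q l (𝓝 1) ∧ (∀ᶠ r in l, 0 < q r) ∧
    ∀ᶠ r in l, e r + q r * B (T r) ≤ A r

namespace AsymptoticallyDominates

variable {α : Type*} {l : Filter α} {T : α → α} {A B : α → ℝ}

theorem eventually_le (h : AsymptoticallyDominates l T A B) (hT : l ≤ map T l) {b b' : ℝ}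
    (hA : ∀ᶠ r in l, A r ≤ b) (hb : b < b') : ∀ᶠ r in l, B r ≤ b' := by
  obtain ⟨e, q, he, hq, hq0, hAB⟩ := h
  have hlim : Tendsto (fun r => (b - e r) / q r) l (𝓝 b) := by
    have := (tendsto_const_nhds (x := b)).sub he |>.div hq one_ne_zero
    rwa [sub_zero, div_one] at this
  refine hT (eventually_map.2 ?_)
  filter_upwards [hAB, hA, hq0, hlim.eventually (eventually_lt_nhds hb)] with r hAB hA hq0 hlt
  refine le_trans ?_ hlt.le
  rw [le_div_iff₀ hq0]
  linarith

theorem eventually_ge (h : AsymptoticallyDominates l T A B) (hT : Tendsto T l l) {a a' : ℝ}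
    (hB : ∀ᶠ r in l, a ≤ B r) (ha : a' < a) : ∀ᶠ r in l, a' ≤ A r := by
  obtain ⟨e, q, he, hq, hq0, hAB⟩ := h
  have hlim : Tendsto (fun r => e r + q r * a) l (𝓝 a) := by
    simpa using he.add (hq.mul_const a)
  filter_upwards [hAB, hT.eventually hB, hq0, hlim.eventually (eventually_gt_nhds ha)]
    with r hAB hB hq0 hgt
  nlinarith

end AsymptoticallyDominates

section MutualDomination

variable {α : Type*} {l : Filter α} {T : α → α} {A B : α → ℝ}

theorem limsup_eq_of_asymptoticallyDominates [l.NeBot] (hT : map T l = l)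
    (hAB : AsymptoticallyDominates l T A B) (hBA : AsymptoticallyDominates l T B A)
    (hA : IsBoundedUnder (· ≥ ·) l A) (hB : IsBoundedUnder (· ≥ ·) l B) :
    limsup A l = limsup B l := by
  obtain ⟨cA, hcA⟩ := hA.isCoboundedUnder_le
  obtain ⟨cB, hcB⟩ := hB.isCoboundedUnder_le
  rw [limsup_eq, limsup_eq]
  exact Real.sInf_eq_sInf_of_forall_lt_mem ⟨cA, hcA⟩ ⟨cB, hcB⟩
    (fun _ hb _ hb' => hAB.eventually_le hT.ge hb hb')
    (fun _ hb _ hb' => hBA.eventually_le hT.ge hb hb')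

theorem liminf_eq_of_asymptoticallyDominates (hT : map T l = l)
    (hAB : AsymptoticallyDominates l T A B) (hBA : AsymptoticallyDominates l T B A)
    (hA : IsBoundedUnder (· ≥ ·) l A) (hB : IsBoundedUnder (· ≥ ·) l B) :
    liminf A l = liminf B l := by
  obtain ⟨cA, hcA⟩ := hA
  obtain ⟨cB, hcB⟩ := hB
  rw [liminf_eq, liminf_eq]
  exact Real.sSup_eq_sSup_of_forall_lt_mem ⟨cA, hcA⟩ ⟨cB, hcB⟩
    (fun _ ha _ ha' => hBA.eventually_ge hT.le ha ha')
    (fun _ ha _ ha' => hAB.eventually_ge hT.le ha ha')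

end MutualDomination

noncomputable def logRatio (f : ℝ → ℝ≥0∞) (r : ℝ) : ℝ :=
  Real.log (f r).toReal / Real.log r

theorem le_logRatio_of_le_mul {f h : ℝ → ℝ≥0∞} {K : ℝ≥0∞} {r s : ℝ} (hK : K ≠ ∞)
    (hr : Real.log r < 0) (hs : Real.log s < 0) (hf : 0 < f r) (hh : h s ≠ ∞)
    (hfh : f r ≤ K * h s) :
    Real.log K.toReal / Real.log r + Real.log s / Real.log r * logRatio h s ≤ logRatio f r := by
  have hxz : (f r).toReal ≤ K.toReal * (h s).toReal := by
    simpa [ENNReal.toReal_mul] using ENNReal.toReal_mono (ENNReal.mul_ne_top hK hh) hfh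
  have hx : 0 < (f r).toReal :=
    ENNReal.toReal_pos hf.ne' (ne_top_of_le_ne_top (ENNReal.mul_ne_top hK hh) hfh)
  have hKz : 0 < K.toReal * (h s).toReal := hx.trans_le hxz
  have hK0 : 0 < K.toReal := pos_of_mul_pos_left hKz ENNReal.toReal_nonneg
  have hz : 0 < (h s).toReal := pos_of_mul_pos_right hKz ENNReal.toReal_nonneg
  have hlog : Real.log (f r).toReal ≤ Real.log K.toReal + Real.log (h s).toReal :=
    (Real.log_le_log hx hxz).trans_eq (Real.log_mul hK0.ne' hz.ne')
  calc Real.log K.toReal / Real.log r + Real.log s / Real.log r * logRatio h s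
      = (Real.log K.toReal + Real.log (h s).toReal) / Real.log r := by
        unfold logRatio; field_simp [hs.ne]
    _ ≤ logRatio f r := div_le_div_of_nonpos_of_le hr.le hlog

theorem logRatio_asymptoticallyDominates {f h : ℝ → ℝ≥0∞} {K : ℝ≥0∞} {a : ℝ} (hK : K ≠ ∞)
    (ha : 0 < a) (hh : ∀ r, h r ≠ ∞) (hf0 : ∀ᶠ r in 𝓝[>] 0, 0 < f r)
    (hfh : ∀ᶠ r in 𝓝[>] 0, f r ≤ K * h (a * r)) :
    AsymptoticallyDominates (𝓝[>] 0) (a * ·) (logRatio f) (logRatio h) := by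
  have hlog := Real.tendsto_log_nhdsGT_zero
  have hlog_neg : ∀ᶠ r in 𝓝[>] (0 : ℝ), Real.log r < 0 := hlog.eventually (eventually_lt_atBot 0)
  have hlog_mul_neg : ∀ᶠ r in 𝓝[>] (0 : ℝ), Real.log (a * r) < 0 := by
    filter_upwards [self_mem_nhdsWithin, hlog.eventually (eventually_lt_atBot (-Real.log a))]
      with r hr hlt
    rw [Real.log_mul ha.ne' (ne_of_gt hr)]
    linarith
  refine ⟨fun r => Real.log K.toReal / Real.log r, fun r => Real.log (a * r) / Real.log r,
    tendsto_const_nhds.div_atBot hlog, ?_, ?_, ?_⟩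
  · have h1 : Tendsto (fun r => Real.log a / Real.log r + 1) (𝓝[>] 0) (𝓝 1) := by
      simpa using (tendsto_const_nhds.div_atBot hlog).add_const (1 : ℝ)
    refine h1.congr' ?_
    filter_upwards [self_mem_nhdsWithin, hlog_neg] with r (hr : 0 < r) hneg
    rw [Real.log_mul ha.ne' hr.ne', add_div, div_self hneg.ne]
  · filter_upwards [hlog_neg, hlog_mul_neg] with r hneg hmul_neg
    exact div_pos_of_neg_of_neg hmul_neg hneg
  · filter_upwards [hlog_neg, hlog_mul_neg, hf0, hfh] with r hneg hmul_neg hf0 hfh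
    exact le_logRatio_of_le_mul hK hneg hmul_neg hf0 (hh _) hfh

theorem isBoundedUnder_ge_logRatio {f : ℝ → ℝ≥0∞} (hf : Monotone f) (hf1 : f 1 ≠ ∞)
    (hf0 : ∀ᶠ r in 𝓝[>] 0, 0 < f r) : IsBoundedUnder (· ≥ ·) (𝓝[>] 0) (logRatio f) := by
  refine ((tendsto_const_nhds (x := Real.log (f 1).toReal)).div_atBot
    Real.tendsto_log_nhdsGT_zero).isBoundedUnder_ge.mono_ge ?_
  filter_upwards [hf0, Ioo_mem_nhdsGT one_pos] with r hf0 hr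
  have hx : 0 < (f r).toReal := ENNReal.toReal_pos hf0.ne' (ne_top_of_le_ne_top hf1 (hf hr.2.le))
  exact div_le_div_of_nonpos_of_le (Real.log_neg hr.1 hr.2).le
    (Real.log_le_log hx (ENNReal.toReal_mono hf1 (hf hr.2.le)))

theorem limsup_logRatio_eq_and_liminf_logRatio_eq {f h : ℝ → ℝ≥0∞} (hf : Monotone f)
    (hh : Monotone h) (hf_top : ∀ r, f r ≠ ∞) (hh_top : ∀ r, h r ≠ ∞) {K : ℝ≥0∞} (hK : K ≠ ∞)
    {a : ℝ} (ha : 0 < a) (hf0 : ∀ᶠ r in 𝓝[>] 0, 0 < f r)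
    (hfh : ∀ᶠ r in 𝓝[>] 0, f r ≤ K * h (a * r)) (hhf : ∀ᶠ r in 𝓝[>] 0, h r ≤ K * f (a * r)) :
    limsup (logRatio f) (𝓝[>] 0) = limsup (logRatio h) (𝓝[>] 0) ∧
      liminf (logRatio f) (𝓝[>] 0) = liminf (logRatio h) (𝓝[>] 0) := by
  have hh0 : ∀ᶠ r in 𝓝[>] 0, 0 < h r := by
    rw [← map_mulLeft_nhdsGT_zero ha, eventually_map]
    filter_upwards [hf0, hfh] with r hf0 hfh
    exact (ENNReal.mul_pos_iff.1 (hf0.trans_le hfh)).2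
  have hfh' := logRatio_asymptoticallyDominates hK ha hh_top hf0 hfh
  have hhf' := logRatio_asymptoticallyDominates hK ha hf_top hh0 hhf
  have hfb := isBoundedUnder_ge_logRatio hf (hf_top 1) hf0
  have hhb := isBoundedUnder_ge_logRatio hh (hh_top 1) hh0
  exact ⟨limsup_eq_of_asymptoticallyDominates (map_mulLeft_nhdsGT_zero ha) hfh' hhf' hfb hhb,
    liminf_eq_of_asymptoticallyDominates (map_mulLeft_nhdsGT_zero ha) hfh' hhf' hfb hhb⟩

theorem pointwiseDim_eq_of_measure_ball_le {m : ℕ} {μ ν : Measure (EuclideanSpace ℝ (Fin m))}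
    [IsLocallyFiniteMeasure μ] [IsLocallyFiniteMeasure ν] {x y : EuclideanSpace ℝ (Fin m)}
    {K : ℝ≥0∞} (hK : K ≠ ∞) {a : ℝ} (ha : 0 < a) (hν0 : ∀ᶠ r in 𝓝[>] 0, 0 < ν (ball y r))
    (hνμ : ∀ᶠ r in 𝓝[>] 0, ν (ball y r) ≤ K * μ (ball x (a * r)))
    (hμν : ∀ᶠ r in 𝓝[>] 0, μ (ball x r) ≤ K * ν (ball y (a * r))) :
    upperPointwiseDim ν y = upperPointwiseDim μ x ∧
      lowerPointwiseDim ν y = lowerPointwiseDim μ x :=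
  limsup_logRatio_eq_and_liminf_logRatio_eq (fun _ _ hrs => measure_mono (ball_subset_ball hrs))
    (fun _ _ hrs => measure_mono (ball_subset_ball hrs)) (fun _ => measure_ball_lt_top.ne)
    (fun _ => measure_ball_lt_top.ne) hK ha hν0 hνμ hμν

section RadonNikodym

variable {α : Type*} [MeasurableSpace α] {μ ν : Measure α} {A : Set α} {c : ℝ≥0∞}

theorem mul_measure_le_of_le_rnDeriv (hc : ∀ x ∈ A, c ≤ μ.rnDeriv ν x) :
    c * ν A ≤ μ A :=
  calc c * ν A = ∫⁻ _ in A, c ∂ν := (setLIntegral_const A c).symm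
    _ ≤ ∫⁻ x in A, μ.rnDeriv ν x ∂ν := setLIntegral_mono (Measure.measurable_rnDeriv μ ν) hc
    _ ≤ μ A := Measure.setLIntegral_rnDeriv_le A

theorem measure_le_mul_of_rnDeriv_le [μ.HaveLebesgueDecomposition ν] (hμν : μ ≪ ν)
    (hA : MeasurableSet A) (hc : ∀ x ∈ A, μ.rnDeriv ν x ≤ c) : μ A ≤ c * ν A :=
  calc μ A = ∫⁻ x in A, μ.rnDeriv ν x ∂ν := (Measure.setLIntegral_rnDeriv' hμν hA).symm
    _ ≤ ∫⁻ _ in A, c ∂ν := setLIntegral_mono measurable_const hc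
    _ = c * ν A := setLIntegral_const A c

end RadonNikodym

namespace IsDensityPoint

variable {m : ℕ} {ρ σ : Measure (EuclideanSpace ℝ (Fin m))} {y : EuclideanSpace ℝ (Fin m)}
  {A : Set (EuclideanSpace ℝ (Fin m))}

theorem eventually_measure_ball_lt_two_mul (h : IsDensityPoint ρ y A) :
    ∀ᶠ r in 𝓝[>] 0, ρ (ball y r) < 2 * ρ (ball y r ∩ A) := by
  filter_upwards [h.eventually (eventually_gt_nhds ENNReal.one_half_lt_one)] with r hr
  have hle : ρ (ball y r ∩ A) ≤ ρ (ball y r) := measure_mono Set.inter_subset_left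
  -- `0 / 0 = 0` and `a / ∞ = 0` in `ℝ≥0∞`, so a ratio above `1/2` forces `0 < ρ (ball y r) < ∞`
  have h0 : ρ (ball y r) ≠ 0 := fun h0 => by simp [h0, le_zero_iff.1 (h0 ▸ hle)] at hr
  have htop : ρ (ball y r) ≠ ∞ := fun htop => by simp [htop] at hr
  calc ρ (ball y r) = 2 * (2⁻¹ * ρ (ball y r)) := by
        rw [← mul_assoc, ENNReal.mul_inv_cancel two_ne_zero ENNReal.ofNat_ne_top, one_mul]
    _ < 2 * ρ (ball y r ∩ A) := by
        gcongr
        exacts [ENNReal.ofNat_ne_top, (ENNReal.lt_div_iff_mul_lt (Or.inl h0) (Or.inl htop)).1 hr]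

theorem eventually_measure_ball_pos (h : IsDensityPoint ρ y A) :
    ∀ᶠ r in 𝓝[>] 0, 0 < ρ (ball y r) := by
  filter_upwards [h.eventually_measure_ball_lt_two_mul] with r hr
  exact pos_of_ne_zero fun h0 => by simp [h0, measure_mono_null Set.inter_subset_left h0] at hr

theorem eventually_measure_ball_le_mul {c : ℝ≥0∞} (h : IsDensityPoint ρ y A)
    (hρσ : ∀ r, ρ (ball y r ∩ A) ≤ c * σ (ball y r ∩ A)) :
    ∀ᶠ r in 𝓝[>] 0, ρ (ball y r) ≤ 2 * c * σ (ball y r) := by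
  filter_upwards [h.eventually_measure_ball_lt_two_mul] with r hr
  calc ρ (ball y r) ≤ 2 * ρ (ball y r ∩ A) := hr.le
    _ ≤ 2 * (c * σ (ball y r ∩ A)) := by gcongr; exact hρσ r
    _ ≤ 2 * c * σ (ball y r) := by
        rw [← mul_assoc]; gcongr; exact Set.inter_subset_left

end IsDensityPoint

theorem IsBoundedDensityPoint.exists_measure_ball_le {m : ℕ}
    {μ' ν : Measure (EuclideanSpace ℝ (Fin m))} [IsLocallyFiniteMeasure μ']
    [IsLocallyFiniteMeasure ν] {y : EuclideanSpace ℝ (Fin m)} (hac : μ' ≪ ν)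
    (hy : IsBoundedDensityPoint μ' ν y) :
    ∃ K ≠ ∞, (∀ᶠ r in 𝓝[>] 0, 0 < ν (ball y r)) ∧
      (∀ᶠ r in 𝓝[>] 0, ν (ball y r) ≤ K * μ' (ball y r)) ∧
      ∀ᶠ r in 𝓝[>] 0, μ' (ball y r) ≤ K * ν (ball y r) := by
  obtain ⟨N, hN, hν, hμ'⟩ := hy
  set S := {x | ENNReal.ofReal (1 / N) ≤ μ'.rnDeriv ν x ∧ μ'.rnDeriv ν x ≤ ENNReal.ofReal N}
  have hS : MeasurableSet S := Measure.measurable_rnDeriv μ' ν measurableSet_Icc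
  have hinv : ENNReal.ofReal (1 / N) = (ENNReal.ofReal N)⁻¹ := by
    rw [one_div, ENNReal.ofReal_inv_of_pos hN]
  have hN0 : ENNReal.ofReal N ≠ 0 := (ENNReal.ofReal_pos.2 hN).ne'
  refine ⟨2 * ENNReal.ofReal N, ENNReal.mul_ne_top ENNReal.ofNat_ne_top ENNReal.ofReal_ne_top,
    hν.eventually_measure_ball_pos, ?_, ?_⟩
  · refine hν.eventually_measure_ball_le_mul fun r => ?_
    rw [← ENNReal.inv_mul_le_iff hN0 ENNReal.ofReal_ne_top, ← hinv]
    exact mul_measure_le_of_le_rnDeriv fun x hx => hx.2.1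
  · exact hμ'.eventually_measure_ball_le_mul fun r =>
      measure_le_mul_of_rnDeriv_le hac (measurableSet_ball.inter hS) fun x hx => hx.2.2

section BiLipschitz

variable {E F : Type*} [SeminormedAddCommGroup E] [SeminormedAddCommGroup F] {g : E → F} {C : ℝ}

theorem preimage_ball_subset_ball_of_le_norm_sub (hC : 0 < C)
    (hg : ∀ x z, C⁻¹ * ‖x - z‖ ≤ ‖g x - g z‖) (x : E) (r : ℝ) :
    g ⁻¹' ball (g x) r ⊆ ball x (C * r) := fun z hz => by
  rw [Set.mem_preimage, mem_ball_iff_norm] at hz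
  rw [mem_ball_iff_norm, ← inv_mul_lt_iff₀ hC]
  exact (hg z x).trans_lt hz

theorem ball_subset_preimage_ball_of_norm_sub_le (hC : 0 < C)
    (hg : ∀ x z, ‖g x - g z‖ ≤ C * ‖x - z‖) (x : E) (r : ℝ) :
    ball x r ⊆ g ⁻¹' ball (g x) (C * r) := fun z hz => by
  rw [mem_ball_iff_norm] at hz
  rw [Set.mem_preimage, mem_ball_iff_norm]
  exact (hg z x).trans_lt (mul_lt_mul_of_pos_left hz hC)

end BiLipschitz

theorem stmt3_general {m : ℕ} (μ ν : Measure (EuclideanSpace ℝ (Fin m)))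
    [IsLocallyFiniteMeasure μ] [IsLocallyFiniteMeasure ν]
    (g g' : EuclideanSpace ℝ (Fin m) → EuclideanSpace ℝ (Fin m))
    (hright : Function.RightInverse g' g)
    (C : ℝ) (hC : 1 ≤ C)
    (hbilip : ∀ x z : EuclideanSpace ℝ (Fin m),
      C⁻¹ * ‖x - z‖ ≤ ‖g x - g z‖ ∧ ‖g x - g z‖ ≤ C * ‖x - z‖)
    (hac : Measure.map g μ ≪ ν)
    (y : EuclideanSpace ℝ (Fin m))
    (hy : IsBoundedDensityPoint (Measure.map g μ) ν y) :
    upperPointwiseDim ν y = upperPointwiseDim μ (g' y) ∧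
    lowerPointwiseDim ν y = lowerPointwiseDim μ (g' y) := by
  have hC0 : 0 < C := zero_lt_one.trans_le hC
  have hg : Measurable g := (LipschitzWith.of_dist_le_mul (K := C.toNNReal) fun x z => by
    simpa [dist_eq_norm, Real.coe_toNNReal C hC0.le] using (hbilip x z).2).continuous.measurable
  have hpre := preimage_ball_subset_ball_of_le_norm_sub hC0 fun x z => (hbilip x z).1
  have hsub := ball_subset_preimage_ball_of_norm_sub_le hC0 fun x z => (hbilip x z).2
  have hmap_le : ∀ x r, Measure.map g μ (ball (g x) r) ≤ μ (ball x (C * r)) := fun x r =>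
    (Measure.map_apply hg measurableSet_ball).trans_le (measure_mono (hpre x r))
  have hle_map : ∀ x r, μ (ball x r) ≤ Measure.map g μ (ball (g x) (C * r)) := fun x r =>
    (measure_mono (hsub x r)).trans (Measure.le_map_apply hg.aemeasurable _)
  have : IsLocallyFiniteMeasure (Measure.map g μ) :=
    ⟨fun c => ⟨ball c 1, ball_mem_nhds c one_pos,
      hright c ▸ (hmap_le (g' c) 1).trans_lt measure_ball_lt_top⟩⟩
  obtain ⟨K, hK, hν0, hνμ', hμ'ν⟩ := hy.exists_measure_ball_le hac
  generalize hx : g' y = x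
  obtain rfl : g x = y := hx ▸ hright y
  refine pointwiseDim_eq_of_measure_ball_le hK hC0 hν0 ?_ ?_
  · filter_upwards [hνμ'] with r hr using hr.trans (mul_le_mul_right (hmap_le x r) K)
  · filter_upwards [eventually_nhdsGT_zero_mul_left hC0 hμ'ν] with r hr
      using (hle_map x r).trans hr

/-- If `g` is a bi-Lipschitz homeomorphism of `ℝ^m` (with inverse `g'`) and
`g_*μ ≪ ν`, then for each bounded `(g_*μ, ν)`-density point `y`, the upper (resp.
lower) pointwise dimension of `ν` at `y` equals that of `μ` at `g⁻¹(y)`. -/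
theorem stmt3 {m : ℕ} (μ ν : Measure (EuclideanSpace ℝ (Fin m)))
    [IsLocallyFiniteMeasure μ] [IsLocallyFiniteMeasure ν]
    (g g' : EuclideanSpace ℝ (Fin m) → EuclideanSpace ℝ (Fin m))
    (hleft : Function.LeftInverse g' g) (hright : Function.RightInverse g' g)
    (C : ℝ) (hC : 1 ≤ C)
    (hbilip : ∀ x z : EuclideanSpace ℝ (Fin m),
      C⁻¹ * ‖x - z‖ ≤ ‖g x - g z‖ ∧ ‖g x - g z‖ ≤ C * ‖x - z‖)
    (hac : Measure.map g μ ≪ ν)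
    (y : EuclideanSpace ℝ (Fin m))
    (hy : IsBoundedDensityPoint (Measure.map g μ) ν y) :
    upperPointwiseDim ν y = upperPointwiseDim μ (g' y) ∧
    lowerPointwiseDim ν y = lowerPointwiseDim μ (g' y) :=
  stmt3_general μ ν g g' hright C hC hbilip hac y hy
end

section
/- Let μ' and ν be locally finite Borel measures on ℝ^m with μ' absolutely continuous with respect to ν. Then μ'-almost every y ∈ ℝ^m is a bounded (μ',ν)-density point. -/
open MeasureTheory Filter Metric
open scoped ENNReal

/-!
The Radon–Nikodym derivative `J = dμ'/dν` is `μ'`-a.e. positive and finite, so `μ'`-almost every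
point lies in one of the countably many level sets `{1/N ≤ J ≤ N}`, `N ∈ ℕ`. By the
Lebesgue–Besicovitch density theorem, almost every point of a measurable set is a density point
for both `μ'` and `ν`, and `ν`-null sets are `μ'`-null. Besicovitch's theorem is stated for closed
balls; continuity of measures from below turns closed-ball densities into open-ball densities.
-/

open Set Topology

section Balls

variable {X : Type*} [PseudoMetricSpace X] [MeasurableSpace X]

theorem tendsto_measure_inter_closedBall_nhdsLT (μ : Measure X) (A : Set X) (x : X) (r : ℝ) :
    Tendsto (fun s => μ (A ∩ closedBall x s)) (𝓝[<] r) (𝓝 (μ (A ∩ ball x r))) := by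
  have hmono : Monotone fun s : Iio r => A ∩ closedBall x s :=
    fun s t hst => inter_subset_inter_right _ (closedBall_subset_closedBall hst)
  have hball : ⋃ s : Iio r, closedBall x (s : ℝ) = ball x r := by
    rw [← biUnion_lt_closedBall, iUnion_subtype]; rfl
  have := tendsto_measure_iUnion_atTop (μ := μ) hmono
  rw [← inter_iUnion, hball] at this
  exact (tendsto_comp_coe_Iio_atTop (f := fun s => μ (A ∩ closedBall x s))).1 this

/-- The ratio over the open ball of radius `r` is a left limit of the ratios over closed balls,
so it stays in every closed set that eventually contains the closed-ball ratios. -/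
theorem tendsto_measure_inter_ball_div_of_closedBall (μ : Measure X) [IsLocallyFiniteMeasure μ]
    (A : Set X) (x : X) {L : ℝ≥0∞}
    (h : Tendsto (fun r => μ (A ∩ closedBall x r) / μ (closedBall x r)) (𝓝[>] 0) (𝓝 L)) :
    Tendsto (fun r => μ (A ∩ ball x r) / μ (ball x r)) (𝓝[>] 0) (𝓝 L) := by
  rw [(closed_nhds_basis L).tendsto_right_iff] at h ⊢
  rintro C ⟨hC, hC_closed⟩
  obtain ⟨r₀, hr₀, hr₀C⟩ := mem_nhdsGT_iff_exists_Ioo_subset.1 (h C ⟨hC, hC_closed⟩)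
  obtain ⟨R, hR, hR_fin⟩ : ∃ R, 0 < R ∧ μ (ball x R) < ∞ :=
    (μ.finiteAt_nhds x).exists_mem_basis nhds_basis_ball
  filter_upwards [Ioo_mem_nhdsGT (lt_min hr₀ hR)] with r ⟨hr, hr_lt⟩
  have h_closed_mem : ∀ᶠ s in 𝓝[<] r, μ (A ∩ closedBall x s) / μ (closedBall x s) ∈ C := by
    filter_upwards [Ioo_mem_nhdsLT hr] with s ⟨hs, hsr⟩
    exact hr₀C ⟨hs, hsr.trans (hr_lt.trans_le (min_le_left _ _))⟩
  refine hC_closed.mem_of_tendsto ?_ h_closed_mem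
  rcases eq_or_ne (μ (ball x r)) 0 with h_null | h_pos
  · refine tendsto_const_nhds.congr' ?_
    filter_upwards [self_mem_nhdsWithin] with s (hsr : s < r)
    have h_closed_null := measure_mono_null (closedBall_subset_ball hsr) h_null
    simp [measure_mono_null inter_subset_right h_null, h_null, h_closed_null,
      measure_mono_null inter_subset_right h_closed_null]
  · have h_fin : μ (ball x r) ≠ ∞ :=
      (measure_mono (ball_subset_ball (hr_lt.trans_le (min_le_right _ _)).le)).trans_lt
        hR_fin |>.ne
    refine ENNReal.Tendsto.div (tendsto_measure_inter_closedBall_nhdsLT μ A x r) (Or.inr h_pos)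
      ?_ (Or.inl h_fin)
    simpa using tendsto_measure_inter_closedBall_nhdsLT μ univ x r

end Balls

theorem ae_isDensityPoint {m : ℕ} (μ : Measure (EuclideanSpace ℝ (Fin m)))
    [IsLocallyFiniteMeasure μ] {A : Set (EuclideanSpace ℝ (Fin m))} (hA : MeasurableSet A) :
    ∀ᵐ y ∂μ, y ∈ A → IsDensityPoint μ y A := by
  filter_upwards [Besicovitch.ae_tendsto_measure_inter_div_of_measurableSet μ hA] with y hy hyA
  rw [indicator_of_mem hyA, Pi.one_apply] at hy
  simpa only [IsDensityPoint, inter_comm] using tendsto_measure_inter_ball_div_of_closedBall μ A y hy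

theorem ENNReal.exists_nat_ofReal_inv_le_and_le_ofReal {a : ℝ≥0∞} (ha₀ : a ≠ 0) (ha : a ≠ ∞) :
    ∃ n : ℕ, ENNReal.ofReal (1 / ((n : ℝ) + 1)) ≤ a ∧ a ≤ ENNReal.ofReal ((n : ℝ) + 1) := by
  have ht : 0 < a.toReal := ENNReal.toReal_pos ha₀ ha
  obtain ⟨n, hn⟩ := exists_nat_ge (max a.toReal (1 / a.toReal))
  refine ⟨n, ?_, ?_⟩ <;> rw [← ENNReal.ofReal_toReal ha] <;> apply ENNReal.ofReal_le_ofReal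
  · rw [one_div_le (by positivity) ht]
    linarith [le_max_right a.toReal (1 / a.toReal)]
  · linarith [le_max_left a.toReal (1 / a.toReal)]

/-- If `μ'` and `ν` are locally finite Borel measures on `ℝ^m` with `μ' ≪ ν`, then
`μ'`-almost every `y` is a bounded `(μ',ν)`-density point. -/
theorem stmt4 {m : ℕ} (μ' ν : Measure (EuclideanSpace ℝ (Fin m)))
    [IsLocallyFiniteMeasure μ'] [IsLocallyFiniteMeasure ν]
    (hac : μ' ≪ ν) :
    ∀ᵐ y ∂μ', IsBoundedDensityPoint μ' ν y := by
  set S : ℕ → Set (EuclideanSpace ℝ (Fin m)) := fun n =>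
    {x | ENNReal.ofReal (1 / ((n : ℝ) + 1)) ≤ μ'.rnDeriv ν x ∧
      μ'.rnDeriv ν x ≤ ENNReal.ofReal ((n : ℝ) + 1)}
  have hS : ∀ n, MeasurableSet (S n) := fun n => μ'.measurable_rnDeriv ν measurableSet_Icc
  filter_upwards [Measure.rnDeriv_pos hac, hac.ae_le (Measure.rnDeriv_lt_top μ' ν),
    ae_all_iff.2 fun n => hac.ae_le (ae_isDensityPoint ν (hS n)),
    ae_all_iff.2 fun n => ae_isDensityPoint μ' (hS n)] with y hy_pos hy_fin hν hμ'
  obtain ⟨n, hn⟩ := ENNReal.exists_nat_ofReal_inv_le_and_le_ofReal hy_pos.ne' hy_fin.ne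
  exact ⟨n + 1, by positivity, hν n hn, hμ' n hn⟩
end

section
/- Let V₁ and V₂ be linear subspaces of ℝ^n of dimensions k₁ ≥ 1 and k₂ ≥ 1 with k₁ + k₂ = n. For i = 1, 2 assume the linear foliation of T^n by cosets of π(V_i) is irrational, i.e., π restricted to V_i is injective (V_i ∩ ℤ^n = {0}) and π(V_i) is dense in T^n; assume moreover that the subgroup π(V₁) ∩ π(V₂) of T^n contains no one-dimensional (connected, nontrivial) subgroup. Let g: T^n → T^n be a homeomorphism such that for every x ∈ T^n and each i = 1, 2, g maps the coset x + π(V_i) onto the coset g(x) + π(V_i). Then g is affine: there exist B ∈ GL(n,ℤ) and v ∈ ℝ^n such that g = T(v) ∘ L_B. -/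
open scoped Matrix

/-- The integer lattice `ℤ^n ⊂ ℝ^n`, as an additive subgroup. -/
noncomputable def intLattice (n : ℕ) : AddSubgroup (Fin n → ℝ) :=
  (Submodule.span ℤ (Set.range fun i : Fin n => (Pi.single i 1 : Fin n → ℝ))).toAddSubgroup

/-- The torus `T^n = ℝ^n / ℤ^n`. -/
abbrev Torus (n : ℕ) := (Fin n → ℝ) ⧸ intLattice n

/-- The quotient homomorphism `π : ℝ^n → T^n`. -/
noncomputable def torusPi (n : ℕ) : (Fin n → ℝ) →+ Torus n :=
  QuotientAddGroup.mk' (intLattice n)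

/-!
As `V₁ ∩ V₂ = 0` and the dimensions add up to `n`, the subspaces are complementary, and
`Γ = π(V₁) ∩ π(V₂)` is the image of `ℤⁿ` under `π ∘ pr`, where `pr` projects onto `V₁` along `V₂`.
So `Γ` is countable, and it is dense because `π(V₁)` and `π(V₂)` are. For `γ ∈ Γ` the map
`z ↦ g(z + γ) - g(z)` is continuous with values in the countable set `Γ`, hence constant on the
connected torus; by density `g - g(0)` is then a continuous automorphism of `Tⁿ`. Lifting it through
the covering `ℝⁿ → Tⁿ` gives an integer matrix, invertible over `ℤ` because the inverse lifts too.
-/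

open Set

theorem Continuous.eq_of_countable_range {X Y : Type*} [TopologicalSpace X] [PreconnectedSpace X]
    [MetricSpace Y] {f : X → Y} (hf : Continuous f) (hc : (range f).Countable) (x y : X) :
    f x = f y :=
  hc.isTotallyDisconnected _ Subset.rfl (isPreconnected_range hf) (mem_range_self x)
    (mem_range_self y)

theorem Continuous.apply_add_eq_of_countable_dense {G : Type*} [NormedAddCommGroup G]
    [PreconnectedSpace G] {Γ : Set G} (hc : Γ.Countable) (hd : Dense Γ) {g : G → G}
    (hg : Continuous g) (hΓ : ∀ γ ∈ Γ, ∀ z, g (z + γ) - g z ∈ Γ) (a b : G) :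
    g (a + b) = g a + g b - g 0 := by
  have htransl : ∀ γ ∈ Γ, g (a + γ) = g a + g γ - g 0 := fun γ hγ => by
    have := (hg.comp (continuous_add_const γ)).sub hg |>.eq_of_countable_range
      (hc.mono (range_subset_iff.2 (hΓ γ hγ))) a 0
    simp only [Pi.sub_apply, Function.comp_apply, zero_add] at this
    rw [add_sub_assoc, ← this]
    abel
  exact congrFun (Continuous.ext_on hd (by fun_prop) (by fun_prop) htransl) b

section ComplementarySubspaces

variable {E : Type*} [NormedAddCommGroup E] [NormedSpace ℝ E] {Λ : AddSubgroup E}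
  {V₁ V₂ : Submodule ℝ E}

lemma IsCompl.countable_image_mk'_inter (hV : IsCompl V₁ V₂) (hΛ : (Λ : Set E).Countable) :
    (QuotientAddGroup.mk' Λ '' V₁ ∩ QuotientAddGroup.mk' Λ '' V₂).Countable := by
  refine (hΛ.image fun m => QuotientAddGroup.mk' Λ (V₁.projection V₂ hV m)).mono ?_
  rintro y ⟨⟨v₁, hv₁, rfl⟩, v₂, hv₂, hy⟩
  refine ⟨v₁ - v₂, QuotientAddGroup.eq_iff_sub_mem.mp hy.symm, ?_⟩
  simp [V₁.projection_apply_of_mem_left hV hv₁, V₁.projection_apply_right hV ⟨v₂, hv₂⟩]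

lemma IsCompl.dense_image_mk'_inter [FiniteDimensional ℝ E] (hV : IsCompl V₁ V₂)
    (h₁ : Dense (QuotientAddGroup.mk' Λ '' V₁)) (h₂ : Dense (QuotientAddGroup.mk' Λ '' V₂)) :
    Dense (QuotientAddGroup.mk' Λ '' V₁ ∩ QuotientAddGroup.mk' Λ '' V₂) := by
  set π := QuotientAddGroup.mk' Λ
  set q : E → E ⧸ Λ := fun x => π (V₁.projection V₂ hV x)
  have hq : Continuous q :=
    continuous_quot_mk.comp (V₁.projection V₂ hV).continuous_of_finiteDimensional
  -- `q x` differs from `π x` by an element of `π '' V₂`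
  have hmaps : q '' (π ⁻¹' (π '' V₂)) ⊆ π '' V₁ ∩ π '' V₂ := by
    rintro _ ⟨x, ⟨v, hv, hvx⟩, rfl⟩
    refine ⟨⟨_, V₁.projection_apply_mem hV x, rfl⟩, v - V₂.projection V₁ hV.symm x,
      V₂.sub_mem hv (V₂.projection_apply_mem hV.symm x), ?_⟩
    simp [q, map_sub, hvx, V₁.projection_eq_self_sub_projection hV]
  have hV₁ : π '' V₁ ⊆ closure (π '' V₁ ∩ π '' V₂) := by
    rintro _ ⟨v, hv, rfl⟩
    have hqv : q v = π v := by simp [q, V₁.projection_apply_of_mem_left hV hv]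
    rw [← hqv]
    refine closure_mono hmaps (image_closure_subset_closure_image hq ⟨v, ?_, rfl⟩)
    exact h₂.preimage QuotientAddGroup.isOpenMap_coe v
  exact dense_closure.mp (h₁.mono hV₁)

end ComplementarySubspaces

namespace Torus

variable {n : ℕ}

lemma intLattice_eq_span_basisFun :
    intLattice n = (Submodule.span ℤ (range (Pi.basisFun ℝ (Fin n)))).toAddSubgroup := by
  simp only [intLattice]
  congr
  ext i
  rw [Pi.basisFun_apply]

lemma mem_intLattice_iff {x : Fin n → ℝ} :
    x ∈ intLattice n ↔ ∀ i, x i ∈ range ((↑) : ℤ → ℝ) := by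
  rw [intLattice_eq_span_basisFun]
  exact (Pi.basisFun ℝ (Fin n)).mem_span_iff_repr_mem ℤ x

lemma single_mem_intLattice (j : Fin n) : (Pi.single j 1 : Fin n → ℝ) ∈ intLattice n :=
  Submodule.subset_span (mem_range_self j)

lemma countable_intLattice : (intLattice n : Set (Fin n → ℝ)).Countable := by
  have : (intLattice n : Set (Fin n → ℝ)) ⊆ range fun m : Fin n → ℤ => fun i => (m i : ℝ) := by
    intro x hx
    choose m hm using mem_intLattice_iff.mp hx
    exact ⟨m, funext hm⟩
  exact (countable_range _).mono this

instance : DiscreteTopology (intLattice n) := by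
  rw [intLattice_eq_span_basisFun]
  infer_instance

instance : IsClosed (intLattice n : Set (Fin n → ℝ)) := AddSubgroup.isClosed_of_discrete

instance : ConnectedSpace (Torus n) :=
  QuotientAddGroup.mk_surjective.connectedSpace continuous_quot_mk

lemma torusPi_eq_zero_iff {x : Fin n → ℝ} : torusPi n x = 0 ↔ x ∈ intLattice n :=
  QuotientAddGroup.eq_zero_iff x

lemma isCoveringMap_torusPi : IsCoveringMap (torusPi n) :=
  (AddSubgroup.isAddQuotientCoveringMap_of_comm _
    ⟨inferInstanceAs (DiscreteTopology (intLattice n))⟩).isCoveringMap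

lemma exists_continuousLinearMap_lift (f : Torus n →+ Torus n) (hf : Continuous f) :
    ∃ L : (Fin n → ℝ) →L[ℝ] (Fin n → ℝ), ∀ x, torusPi n (L x) = f (torusPi n x) := by
  obtain ⟨ψ, ⟨hψ0, hψ⟩, -⟩ := isCoveringMap_torusPi.existsUnique_continuousMap_lifts
    ⟨f ∘ torusPi n, hf.comp continuous_quot_mk⟩ 0 0 (by simp)
  have hψπ : ∀ x, torusPi n (ψ x) = f (torusPi n x) := congrFun hψ
  have hadd : ∀ x y, ψ (x + y) = ψ x + ψ y := by
    intro x y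
    -- the defect from additivity is lattice valued, hence constant
    have hlat : ∀ p : (Fin n → ℝ) × (Fin n → ℝ), ψ (p.1 + p.2) - ψ p.1 - ψ p.2 ∈ intLattice n :=
      fun p => torusPi_eq_zero_iff.mp (by simp [hψπ])
    have := Continuous.eq_of_countable_range (by fun_prop)
      (countable_intLattice.mono (range_subset_iff.2 hlat)) (x, y) 0
    simpa [hψ0, sub_sub, sub_eq_zero] using this
  exact ⟨(AddMonoidHom.mk' ψ hadd).toRealLinearMap ψ.continuous, hψπ⟩

lemma exists_intMatrix_map_eq_toMatrix' (L : (Fin n → ℝ) →ₗ[ℝ] (Fin n → ℝ))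
    (hL : ∀ j, L (Pi.single j 1) ∈ intLattice n) :
    ∃ B : Matrix (Fin n) (Fin n) ℤ, B.map (Int.cast : ℤ → ℝ) = LinearMap.toMatrix' L := by
  choose B hB using fun i j => mem_intLattice_iff.mp (hL j) i
  exact ⟨.of B, Matrix.ext fun i j => by simp [hB, LinearMap.toMatrix'_apply]⟩

lemma exists_intMatrix_lift (f : Torus n →+ Torus n) (hf : Continuous f) :
    ∃ B : Matrix (Fin n) (Fin n) ℤ, ∀ x,
      f (torusPi n x) = torusPi n ((B.map (Int.cast : ℤ → ℝ)) *ᵥ x) := by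
  obtain ⟨L, hL⟩ := exists_continuousLinearMap_lift f hf
  obtain ⟨B, hB⟩ := exists_intMatrix_map_eq_toMatrix' L.toLinearMap fun j =>
    torusPi_eq_zero_iff.mp <| by simp [hL, torusPi_eq_zero_iff.mpr (single_mem_intLattice j)]
  exact ⟨B, fun x => by simp [hB, LinearMap.toMatrix'_mulVec, hL]⟩

lemma eq_of_torusPi_mulVec_eq {M M' : Matrix (Fin n) (Fin n) ℝ}
    (h : ∀ x, torusPi n (M *ᵥ x) = torusPi n (M' *ᵥ x)) : M = M' := by
  have hlat : ∀ x, (M - M') *ᵥ x ∈ intLattice n := fun x =>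
    torusPi_eq_zero_iff.mp (by rw [Matrix.sub_mulVec, map_sub, h, sub_self])
  refine Matrix.toLin'.injective (LinearMap.ext fun x => ?_)
  have := Continuous.eq_of_countable_range (Matrix.toLin' (M - M')).continuous_of_finiteDimensional
    (countable_intLattice.mono (range_subset_iff.2 hlat)) x 0
  simpa [Matrix.sub_mulVec, sub_eq_zero] using this

lemma exists_intMatrix_isUnit_det_lift (e : Torus n ≃ₜ+ Torus n) :
    ∃ B : Matrix (Fin n) (Fin n) ℤ, IsUnit B.det ∧ ∀ x,
      e (torusPi n x) = torusPi n ((B.map (Int.cast : ℤ → ℝ)) *ᵥ x) := by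
  obtain ⟨B, hB⟩ := exists_intMatrix_lift e.toAddEquiv.toAddMonoidHom e.continuous
  obtain ⟨C, hC⟩ := exists_intMatrix_lift e.symm.toAddEquiv.toAddMonoidHom e.symm.continuous
  have hBC : (B * C).map (Int.cast : ℤ → ℝ) = (1 : Matrix (Fin n) (Fin n) ℤ).map Int.cast := by
    refine eq_of_torusPi_mulVec_eq fun x => ?_
    have hmul : (B * C).map (Int.cast : ℤ → ℝ) = B.map Int.cast * C.map Int.cast :=
      Matrix.map_mul (f := Int.castRingHom ℝ)
    rw [hmul, Matrix.map_one _ Int.cast_zero Int.cast_one, Matrix.one_mulVec,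
      ← Matrix.mulVec_mulVec, ← hB, ← hC]
    exact e.apply_symm_apply _
  exact ⟨B, Matrix.isUnit_det_of_right_inverse (Matrix.map_injective Int.cast_injective hBC), hB⟩

lemma exists_affine_of_apply_add (g : Torus n ≃ₜ Torus n)
    (hg : ∀ a b, g (a + b) = g a + g b - g 0) :
    ∃ (B : Matrix (Fin n) (Fin n) ℤ) (v : Fin n → ℝ), IsUnit B.det ∧ ∀ x : Fin n → ℝ,
      g (torusPi n x) = torusPi n ((B.map (Int.cast : ℤ → ℝ)) *ᵥ x + v) := by
  let e : Torus n ≃ₜ+ Torus n :=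
    { g.trans (Homeomorph.subRight (g 0)) with
      map_add' := fun a b => show g (a + b) - g 0 = (g a - g 0) + (g b - g 0) by
        rw [hg]; abel }
  obtain ⟨B, hB, he⟩ := exists_intMatrix_isUnit_det_lift e
  obtain ⟨v, hv⟩ := QuotientAddGroup.mk_surjective (g 0)
  refine ⟨B, v, hB, fun x => ?_⟩
  rw [map_add, ← he, show torusPi n v = g 0 from hv]
  exact (sub_add_cancel (g (torusPi n x)) (g 0)).symm

lemma apply_add_sub_apply_mem_of_image_leaf {V : Submodule ℝ (Fin n → ℝ)}
    {g : Torus n → Torus n}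
    (hV : ∀ x : Torus n,
      g '' {y | ∃ v ∈ V, y = x + torusPi n v} = {y | ∃ v ∈ V, y = g x + torusPi n v})
    (z : Torus n) {γ : Torus n} (hγ : γ ∈ torusPi n '' V) :
    g (z + γ) - g z ∈ torusPi n '' V := by
  obtain ⟨v, hv, rfl⟩ := hγ
  obtain ⟨w, hw, hgw⟩ : g (z + torusPi n v) ∈ {y | ∃ v ∈ V, y = g z + torusPi n v} :=
    hV z ▸ mem_image_of_mem g ⟨v, hv, rfl⟩
  exact ⟨w, hw, by rw [hgw, add_sub_cancel_left]⟩

end Torus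

open Torus

theorem stmt6_general {n : ℕ} (V₁ V₂ : Submodule ℝ (Fin n → ℝ)) (k₁ k₂ : ℕ)
    (hsum : k₁ + k₂ = n)
    (hd₁ : Module.finrank ℝ V₁ = k₁) (hd₂ : Module.finrank ℝ V₂ = k₂)
    (hdense₁ : Dense (torusPi n '' (V₁ : Set (Fin n → ℝ))))
    (hdense₂ : Dense (torusPi n '' (V₂ : Set (Fin n → ℝ))))
    (hno1dim : ¬ ∃ w : Fin n → ℝ, w ≠ 0 ∧ ∀ t : ℝ,
      torusPi n (t • w) ∈ (torusPi n '' (V₁ : Set (Fin n → ℝ))) ∩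
        (torusPi n '' (V₂ : Set (Fin n → ℝ))))
    (g : Torus n ≃ₜ Torus n)
    (hfol₁ : ∀ x : Torus n,
      g '' {y | ∃ v ∈ V₁, y = x + torusPi n v} = {y | ∃ v ∈ V₁, y = g x + torusPi n v})
    (hfol₂ : ∀ x : Torus n,
      g '' {y | ∃ v ∈ V₂, y = x + torusPi n v} = {y | ∃ v ∈ V₂, y = g x + torusPi n v}) :
    ∃ (B : Matrix (Fin n) (Fin n) ℤ) (v : Fin n → ℝ), IsUnit B.det ∧
      ∀ x : Fin n → ℝ,
        g (torusPi n x) = torusPi n ((B.map (Int.cast : ℤ → ℝ)).mulVec x + v) := by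
  have hV : IsCompl V₁ V₂ := by
    refine (Submodule.isCompl_iff_disjoint V₁ V₂ (by simp [hd₁, hd₂, hsum])).mpr ?_
    refine Submodule.disjoint_def.mpr fun w hw₁ hw₂ => by_contra fun hw => hno1dim ?_
    exact ⟨w, hw, fun t => ⟨⟨t • w, V₁.smul_mem t hw₁, rfl⟩, t • w, V₂.smul_mem t hw₂, rfl⟩⟩
  have hΓ : ∀ γ ∈ torusPi n '' V₁ ∩ torusPi n '' V₂, ∀ z,
      g (z + γ) - g z ∈ torusPi n '' V₁ ∩ torusPi n '' V₂ := fun γ hγ z =>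
    ⟨apply_add_sub_apply_mem_of_image_leaf hfol₁ z hγ.1,
      apply_add_sub_apply_mem_of_image_leaf hfol₂ z hγ.2⟩
  exact exists_affine_of_apply_add g <| g.continuous.apply_add_eq_of_countable_dense
    (hV.countable_image_mk'_inter (Λ := intLattice n) countable_intLattice)
    (hV.dense_image_mk'_inter hdense₁ hdense₂) hΓ

/-- If `g` is a homeomorphism of `T^n` preserving two transverse irrational linear
foliations whose joint direction groups contain no one-dimensional subgroup, then
`g` is affine: `g = T(v) ∘ L_B` for some `B ∈ GL(n,ℤ)` and `v ∈ ℝ^n`. -/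
theorem stmt6 {n : ℕ} (V₁ V₂ : Submodule ℝ (Fin n → ℝ)) (k₁ k₂ : ℕ)
    (hk₁ : 1 ≤ k₁) (hk₂ : 1 ≤ k₂) (hsum : k₁ + k₂ = n)
    (hd₁ : Module.finrank ℝ V₁ = k₁) (hd₂ : Module.finrank ℝ V₂ = k₂)
    (hinj₁ : ∀ v ∈ V₁, v ∈ intLattice n → v = 0)
    (hinj₂ : ∀ v ∈ V₂, v ∈ intLattice n → v = 0)
    (hdense₁ : Dense (torusPi n '' (V₁ : Set (Fin n → ℝ))))
    (hdense₂ : Dense (torusPi n '' (V₂ : Set (Fin n → ℝ))))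
    (hno1dim : ¬ ∃ w : Fin n → ℝ, w ≠ 0 ∧ ∀ t : ℝ,
      torusPi n (t • w) ∈ (torusPi n '' (V₁ : Set (Fin n → ℝ))) ∩
        (torusPi n '' (V₂ : Set (Fin n → ℝ))))
    (g : Torus n ≃ₜ Torus n)
    (hfol₁ : ∀ x : Torus n,
      g '' {y | ∃ v ∈ V₁, y = x + torusPi n v} = {y | ∃ v ∈ V₁, y = g x + torusPi n v})
    (hfol₂ : ∀ x : Torus n,
      g '' {y | ∃ v ∈ V₂, y = x + torusPi n v} = {y | ∃ v ∈ V₂, y = g x + torusPi n v}) :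
    ∃ (B : Matrix (Fin n) (Fin n) ℤ) (v : Fin n → ℝ), IsUnit B.det ∧
      ∀ x : Fin n → ℝ,
        g (torusPi n x) = torusPi n ((B.map (Int.cast : ℤ → ℝ)).mulVec x + v) :=
  stmt6_general V₁ V₂ k₁ k₂ hsum hd₁ hd₂ hdense₁ hdense₂ hno1dim g hfol₁ hfol₂
end

section
/- Let F: ℝ → ℝ be a continuous function with the property that |F(x) − F(y)| = |F(x') − F(y')| whenever x, y, x', y' ∈ ℝ satisfy |x − y| = |x' − y'| (that is, the quantity |F(x) − F(y)| depends only on |x − y|). Then F is affine: there exist a, b ∈ ℝ such that F(x) = a x + b for all x ∈ ℝ. -/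
/-- If `F : ℝ → ℝ` is continuous and `|F(x) − F(y)|` depends only on `|x − y|`,
then `F` is affine. -/
theorem stmt9 (F : ℝ → ℝ) (hF : Continuous F)
    (h : ∀ x y x' y' : ℝ, |x - y| = |x' - y'| → |F x - F y| = |F x' - F y'|) :
    ∃ a b : ℝ, ∀ x : ℝ, F x = a * x + b := by
  by_cases hc : ∀ x, F x = F 0
  · exact ⟨0, F 0, fun x => by rw [hc x]; ring⟩
  -- F is injective
  push_neg at hc
  obtain ⟨z, hz⟩ := hc
  have hinj : Function.Injective F := by
    intro u v huv
    by_contra hne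
    -- F is periodic with period v - u
    have hp : Function.Periodic F (v - u) := by
      intro x
      have := h (x + (v - u)) x v u (by ring_nf)
      rw [huv, sub_self, abs_zero, abs_eq_zero, sub_eq_zero] at this
      exact this
    have hvu : v - u ≠ 0 := sub_ne_zero.mpr (Ne.symm hne)
    have hcomp : IsCompact (Set.range F) := hp.compact_of_continuous hvu hF
    have hne' : (Set.range F).Nonempty := ⟨F 0, 0, rfl⟩
    obtain ⟨M, hMmem, hM⟩ := hcomp.exists_isGreatest hne'
    obtain ⟨m, hmmem, hm⟩ := hcomp.exists_isLeast hne'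
    obtain ⟨x0, hx0⟩ := hMmem
    obtain ⟨x1, hx1⟩ := hmmem
    -- every value of F is m or M
    have key : ∀ x : ℝ, F x = m ∨ F x = M := by
      intro x
      have habs : |F (x + (x1 - x0)) - F x| = |F x1 - F x0| := by
        apply h; ring_nf
      rw [hx0, hx1] at habs
      have hmM : m ≤ M := le_trans (hm ⟨x0, hx0⟩) (hM ⟨x0, hx0⟩) |>.trans (le_refl M) |>.trans (le_refl M)
      have hle1 : F (x + (x1 - x0)) ≤ M := hM ⟨_, rfl⟩
      have hge1 : m ≤ F (x + (x1 - x0)) := hm ⟨_, rfl⟩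
      have hle2 : F x ≤ M := hM ⟨_, rfl⟩
      have hge2 : m ≤ F x := hm ⟨_, rfl⟩
      rcases abs_eq_abs.mp habs with h1 | h1
      · right; linarith
      · left; linarith
    -- but F is not constant, so m < M, and IVT gives an intermediate value
    have hmM : m < M := by
      rcases lt_or_ge m M with h' | h'
      · exact h'
      · exfalso; apply hz
        have hM' : ∀ y, F y = M := fun y => le_antisymm (hM ⟨y, rfl⟩) (h'.trans (hm ⟨y, rfl⟩))
        rw [hM' z, hM' 0]
    have hiv : ∃ c, F c = (m + M) / 2 := by
      have hsub := intermediate_value_uIcc (a := x1) (b := x0) hF.continuousOn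
      rw [hx0, hx1] at hsub
      have hmem : (m + M) / 2 ∈ Set.uIcc m M := by
        rw [Set.uIcc_of_le hmM.le]; exact ⟨by linarith, by linarith⟩
      obtain ⟨c, _, hc⟩ := hsub hmem
      exact ⟨c, hc⟩
    obtain ⟨c, hc⟩ := hiv
    rcases key c with h1 | h1 <;> rw [hc] at h1 <;> linarith
  -- F strictly monotone or antitone
  have hmono := hF.strictMono_of_inj hinj
  -- key additivity: F (x + t) - F x = F t - F 0
  have hadd : ∀ x t : ℝ, F (x + t) - F x = F t - F 0 := by
    intro x t
    have habs : |F (x + t) - F x| = |F t - F 0| := by apply h; ring_nf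
    rcases lt_trichotomy t 0 with ht | ht | ht
    · rcases hmono with hm | hm
      · have h1 : F (x + t) < F x := hm (by linarith)
        have h2 : F t < F 0 := hm ht
        rcases abs_eq_abs.mp habs with he | he
        · exact he
        · linarith
      · have h1 : F x < F (x + t) := hm (by linarith)
        have h2 : F 0 < F t := hm ht
        rcases abs_eq_abs.mp habs with he | he
        · exact he
        · linarith
    · simp [ht]
    · rcases hmono with hm | hm
      · have h1 : F x < F (x + t) := hm (by linarith)
        have h2 : F 0 < F t := hm ht
        rcases abs_eq_abs.mp habs with he | he
        · exact he
        · linarith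
      · have h1 : F (x + t) < F x := hm (by linarith)
        have h2 : F t < F 0 := hm ht
        rcases abs_eq_abs.mp habs with he | he
        · exact he
        · linarith
  -- G := F - F 0 is additive and continuous, hence linear
  set G : ℝ → ℝ := fun x => F x - F 0 with hG
  have hGadd : ∀ x y, G (x + y) = G x + G y := by
    intro x y
    have := hadd x y
    simp only [hG]
    linarith
  have hGcont : Continuous G := hF.sub continuous_const
  let φ : ℝ →+ ℝ := AddMonoidHom.mk' G hGadd
  have hlin : ∀ x : ℝ, F x - F 0 = (F 1 - F 0) * x := by
    intro x
    have := (AddMonoidHom.toRealLinearMap φ hGcont).map_smul x 1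
    simpa [φ, hG, AddMonoidHom.mk', mul_comm, smul_eq_mul] using this
  exact ⟨F 1 - F 0, F 0, fun x => by linarith [hlin x]⟩
end

section
/- Let A and B be 2×2 integer matrices with determinant ±1 (elements of GL(2,ℤ)). Suppose that A, regarded as a real matrix, has a real eigenvalue λ with |λ| > 1, and let v ∈ ℝ² be a nonzero eigenvector of A for λ. If B maps the line ℝ·v to itself (i.e., B v ∈ ℝ·v), then A B = B A. -/
/-!
Since `det A = ±1`, the characteristic polynomial of `A` is monic over `ℤ` with constant term
`±1`, so a rational eigenvalue of `A` would be an integer dividing `±1`; hence `λ` is irrational.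
The integer matrix `C = AB - BA` kills `v`, because `B v ∈ ℝ v`. A nonzero row of `C` would put
`v` on a line spanned by an integer vector `w`, and then `λ = (A w)ₖ / wₖ` would be rational.
So `C = 0`.
-/

open Matrix Polynomial

theorem exists_smul_eq_of_dotProduct_eq_zero {K : Type*} [Field K] {r v : Fin 2 → K}
    (hr : r ≠ 0) (h : r ⬝ᵥ v = 0) : ∃ t : K, v = t • ![-r 1, r 0] := by
  rw [dotProduct, Fin.sum_univ_two] at h
  by_cases h0 : r 0 = 0
  · have h1 : r 1 ≠ 0 := fun h1 => hr (by ext i; fin_cases i <;> simp [h0, h1])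
    have hv1 : v 1 = 0 := by simpa [h0, h1] using h
    refine ⟨-v 0 / r 1, ?_⟩
    ext i
    fin_cases i <;> simp [h0, hv1, h1]
  · refine ⟨v 1 / r 0, ?_⟩
    ext i
    fin_cases i
    · simp only [Fin.zero_eta, Fin.isValue, Pi.smul_apply, cons_val_zero, smul_eq_mul, mul_neg]
      field_simp
      linear_combination h
    · simp [h0]

namespace Matrix

variable {n : Type*} [Fintype n]

theorem mem_range_ratCast_of_mulVec_intCast_eq_smul {A : Matrix n n ℤ} {μ : ℝ} {w : n → ℤ}
    (hw : w ≠ 0) (h : A.map (Int.cast : ℤ → ℝ) *ᵥ (Int.cast ∘ w) = μ • (Int.cast ∘ w)) :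
    μ ∈ Set.range ((↑) : ℚ → ℝ) := by
  obtain ⟨k, hk⟩ := Function.ne_iff.mp hw
  refine ⟨(A *ᵥ w) k / w k, ?_⟩
  have hk' : (w k : ℝ) ≠ 0 := by exact_mod_cast hk
  have hAw : ((A *ᵥ w) k : ℝ) = μ * w k := by
    simpa [mulVec, dotProduct] using congrFun h k
  push_cast
  rw [hAw, mul_div_cancel_right₀ _ hk']

variable [DecidableEq n]

theorem isRoot_charpoly_of_mulVec_eq_smul {K : Type*} [Field K] {M : Matrix n n K} {μ : K}
    {v : n → K} (hv : v ≠ 0) (h : M *ᵥ v = μ • v) : M.charpoly.IsRoot μ := by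
  rw [IsRoot, eval_charpoly, ← exists_mulVec_eq_zero_iff]
  exact ⟨v, hv, by simp [sub_mulVec, h]⟩

theorem irrational_of_mulVec_eq_smul_of_isUnit_det {A : Matrix n n ℤ} (hA : IsUnit A.det)
    {μ : ℝ} (hμ : |μ| ≠ 1) {v : n → ℝ} (hv : v ≠ 0) (h : A.map (Int.cast : ℤ → ℝ) *ᵥ v = μ • v) :
    Irrational μ := by
  rintro ⟨q, rfl⟩
  have hroot : aeval q A.charpoly = 0 := by
    have := isRoot_charpoly_of_mulVec_eq_smul (M := A.map (algebraMap ℤ ℝ)) hv h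
    rw [charpoly_map, IsRoot, eval_map_algebraMap, ← eq_ratCast (algebraMap ℚ ℝ),
      aeval_algebraMap_apply] at this
    exact (map_eq_zero_iff _ (algebraMap ℚ ℝ).injective).mp this
  obtain ⟨m, rfl, hm⟩ := exists_integer_of_is_root_of_monic A.charpoly_monic hroot
  have hm : IsUnit m := isUnit_of_dvd_unit (hm.mul_left _) (A.det_eq_sign_charpoly_coeff ▸ hA)
  rcases Int.isUnit_iff.mp hm with rfl | rfl <;> simp at hμ

theorem eq_zero_of_mulVec_eq_zero_of_irrational_eigenvalue {A C : Matrix (Fin 2) (Fin 2) ℤ}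
    {μ : ℝ} (hμ : Irrational μ) {v : Fin 2 → ℝ} (hv : v ≠ 0)
    (hA : A.map (Int.cast : ℤ → ℝ) *ᵥ v = μ • v) (hC : C.map (Int.cast : ℤ → ℝ) *ᵥ v = 0) :
    C = 0 := by
  by_contra hC0
  obtain ⟨i, hi⟩ : ∃ i, C i ≠ 0 := by
    by_contra! h
    exact hC0 (funext h)
  obtain ⟨t, rfl⟩ := exists_smul_eq_of_dotProduct_eq_zero (r := fun j => (C i j : ℝ))
    (fun h => hi (funext fun j => by simpa using congrFun h j)) (congrFun hC i)
  have ht : t ≠ 0 := by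
    rintro rfl
    exact hv (zero_smul _ _)
  refine hμ (mem_range_ratCast_of_mulVec_intCast_eq_smul (A := A) (w := ![-C i 1, C i 0]) ?_ ?_)
  · intro h
    apply hi
    ext j
    fin_cases j
    · simpa using congrFun h 1
    · simpa using congrFun h 0
  · have hw : (Int.cast ∘ ![-C i 1, C i 0] : Fin 2 → ℝ) = ![-(C i 1 : ℝ), C i 0] := by
      ext j
      fin_cases j <;> simp
    rw [mulVec_smul, smul_comm] at hA
    rw [hw]
    exact smul_right_injective _ ht hA

end Matrix

theorem stmt10_general (A B : Matrix (Fin 2) (Fin 2) ℤ)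
    (hA : IsUnit A.det)
    (lam : ℝ) (hlam : 1 < |lam|)
    (v : Fin 2 → ℝ) (hv : v ≠ 0)
    (heig : (A.map (Int.cast : ℤ → ℝ)).mulVec v = lam • v)
    (hBv : ∃ c : ℝ, (B.map (Int.cast : ℤ → ℝ)).mulVec v = c • v) :
    A * B = B * A := by
  obtain ⟨c, hc⟩ := hBv
  have hirr : Irrational lam := irrational_of_mulVec_eq_smul_of_isUnit_det hA hlam.ne' hv heig
  rw [← sub_eq_zero]
  refine eq_zero_of_mulVec_eq_zero_of_irrational_eigenvalue hirr hv heig ?_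
  have hmap : (A * B - B * A).map (Int.cast : ℤ → ℝ)
      = A.map Int.cast * B.map Int.cast - B.map Int.cast * A.map Int.cast := by
    rw [Matrix.map_sub _ Int.cast_sub]
    exact congrArg₂ (· - ·) (Matrix.map_mul (f := Int.castRingHom ℝ))
      (Matrix.map_mul (f := Int.castRingHom ℝ))
  rw [hmap, sub_mulVec, ← mulVec_mulVec, ← mulVec_mulVec, hc, heig, mulVec_smul, mulVec_smul,
    heig, hc, smul_comm, sub_self]

/-- Let `A, B ∈ GL(2,ℤ)`.  If `A` (as a real matrix) has a real eigenvalue `λ` with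
`|λ| > 1` and eigenvector `v ≠ 0`, and `B` maps the line `ℝ·v` to itself, then
`A` and `B` commute. -/
theorem stmt10 (A B : Matrix (Fin 2) (Fin 2) ℤ)
    (hA : IsUnit A.det) (hB : IsUnit B.det)
    (lam : ℝ) (hlam : 1 < |lam|)
    (v : Fin 2 → ℝ) (hv : v ≠ 0)
    (heig : (A.map (Int.cast : ℤ → ℝ)).mulVec v = lam • v)
    (hBv : ∃ c : ℝ, (B.map (Int.cast : ℤ → ℝ)).mulVec v = c • v) :
    A * B = B * A :=
  stmt10_general A B hA lam hlam v hv heig hBv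
end

section
/- Let B be an n×n integer matrix with det(B − I) ≠ 0 and let v ∈ ℝ^n. Then the affine map f: T^n → T^n defined by f(π(x)) = π(Bx + v) is well defined, its set of fixed points is nonempty and finite, and it has exactly |det(B − I)| fixed points. -/
open Matrix

theorem Matrix.index_range_mulVecLin {ι : Type*} [Fintype ι] [DecidableEq ι]
    (A : Matrix ι ι ℤ) (hA : A.det ≠ 0) :
    (LinearMap.range A.mulVecLin).toAddSubgroup.index = A.det.natAbs := by
  let e := LinearEquiv.ofInjective A.mulVecLin (mulVec_injective_of_det_ne_zero hA)
  have hcomp : (LinearMap.range A.mulVecLin).subtype ∘ₗ (e : (ι → ℤ) →+ _).toIntLinearMap =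
      toLin' A := by
    ext; rfl
  rw [← LinearMap.det_toLin' A, ← hcomp, Submodule.natAbs_det_equiv]
  rfl

theorem Matrix.inv_mulVec_eq_iff {ι K : Type*} [Fintype ι] [DecidableEq ι] [Field K]
    {D : Matrix ι ι K} (hD : D.det ≠ 0) {x y : ι → K} : D⁻¹ *ᵥ y = x ↔ y = D *ᵥ x := by
  have hu : IsUnit D.det := hD.isUnit
  constructor <;> rintro rfl
  · rw [mulVec_mulVec, mul_nonsing_inv _ hu, one_mulVec]
  · rw [mulVec_mulVec, nonsing_inv_mul _ hu, one_mulVec]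

theorem AddMonoidHom.ncard_preimage_singleton {G H : Type*} [AddGroup G] [AddGroup H]
    (φ : G →+ H) {y : H} (hy : y ∈ φ.range) : (φ ⁻¹' {y}).ncard = Nat.card φ.ker := by
  obtain ⟨x, rfl⟩ := hy
  have hfiber : φ ⁻¹' {φ x} = (x + ·) '' φ.ker := by
    ext z
    simp only [Set.mem_preimage, Set.mem_singleton_iff, Set.mem_image, SetLike.mem_coe, mem_ker]
    refine ⟨fun h => ⟨-x + z, by simp [h], add_neg_cancel_left x z⟩, ?_⟩
    rintro ⟨k, hk, rfl⟩
    simp [hk]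
  rw [hfiber, Set.ncard_image_of_injective _ (add_right_injective x), ← Nat.card_coe_set_eq,
    SetLike.coe_sort_coe]

section Torus

variable {n : ℕ}

abbrev intCastVec (n : ℕ) : (Fin n → ℤ) →+ (Fin n → ℝ) :=
  (Int.castAddHom ℝ).compLeft (Fin n)

theorem intLattice_eq_range : intLattice n = (intCastVec n).range := by
  ext x
  have hbasis : (Set.range fun i : Fin n => (Pi.single i 1 : Fin n → ℝ)) =
      Set.range (Pi.basisFun ℝ (Fin n)) := by
    congr 1
    funext i
    exact (Pi.basisFun_apply ℝ (Fin n) i).symm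
  simp only [intLattice, Submodule.mem_toAddSubgroup, hbasis,
    Module.Basis.mem_span_iff_repr_mem, Pi.basisFun_repr, AddMonoidHom.mem_range]
  constructor
  · intro h
    choose m hm using h
    exact ⟨m, funext hm⟩
  · rintro ⟨m, rfl⟩ i
    exact ⟨m i, rfl⟩

theorem map_intCast_mulVec (A : Matrix (Fin n) (Fin n) ℤ) (m : Fin n → ℤ) :
    A.map (Int.cast : ℤ → ℝ) *ᵥ intCastVec n m = intCastVec n (A *ᵥ m) := by
  ext i
  exact ((Int.castRingHom ℝ).map_mulVec A m i).symm

theorem intCastVec_injective : Function.Injective (intCastVec n) :=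
  fun _ _ h => funext fun i => Int.cast_injective (congrFun h i)

theorem det_map_intCast_ne_zero {A : Matrix (Fin n) (Fin n) ℤ} (hA : A.det ≠ 0) :
    (A.map (Int.cast : ℤ → ℝ)).det ≠ 0 := by
  rw [← Int.cast_det]
  exact_mod_cast hA

theorem torusPi_eq_zero_iff {x : Fin n → ℝ} : torusPi n x = 0 ↔ x ∈ intLattice n :=
  QuotientAddGroup.eq_zero_iff x

theorem intLattice_le_comap_mulVec (A : Matrix (Fin n) (Fin n) ℤ) :
    intLattice n ≤ (intLattice n).comap (A.map (Int.cast : ℤ → ℝ)).mulVecLin.toAddMonoidHom := by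
  intro x hx
  rw [intLattice_eq_range] at hx
  obtain ⟨m, rfl⟩ := hx
  rw [AddSubgroup.mem_comap, intLattice_eq_range]
  exact ⟨A *ᵥ m, (map_intCast_mulVec A m).symm⟩

noncomputable def torusHom (A : Matrix (Fin n) (Fin n) ℤ) : Torus n →+ Torus n :=
  QuotientAddGroup.map _ _ _ (intLattice_le_comap_mulVec A)

theorem torusHom_torusPi (A : Matrix (Fin n) (Fin n) ℤ) (x : Fin n → ℝ) :
    torusHom A (torusPi n x) = torusPi n (A.map (Int.cast : ℤ → ℝ) *ᵥ x) :=
  QuotientAddGroup.map_mk _ _ _ _ x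

theorem torusHom_sub_one (A : Matrix (Fin n) (Fin n) ℤ) (p : Torus n) :
    torusHom (A - 1) p = torusHom A p - p := by
  obtain ⟨x, rfl⟩ := QuotientAddGroup.mk'_surjective _ p
  change torusHom (A - 1) (torusPi n x) = torusHom A (torusPi n x) - torusPi n x
  rw [torusHom_torusPi, torusHom_torusPi, ← map_sub, Matrix.map_sub _ Int.cast_sub,
    Matrix.map_one _ Int.cast_zero Int.cast_one, sub_mulVec, one_mulVec]

theorem torusHom_surjective {A : Matrix (Fin n) (Fin n) ℤ} (hA : A.det ≠ 0) :
    Function.Surjective (torusHom A) := by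
  intro p
  obtain ⟨y, rfl⟩ := QuotientAddGroup.mk'_surjective _ p
  have hD := (isUnit_iff_isUnit_det _).2 (det_map_intCast_ne_zero hA).isUnit
  obtain ⟨x, rfl⟩ := mulVec_surjective_iff_isUnit.2 hD y
  exact ⟨torusPi n x, torusHom_torusPi A x⟩

theorem natCard_ker_torusHom {A : Matrix (Fin n) (Fin n) ℤ} (hA : A.det ≠ 0) :
    Nat.card (torusHom A).ker = A.det.natAbs := by
  set D := A.map (Int.cast : ℤ → ℝ)
  have hD : D.det ≠ 0 := det_map_intCast_ne_zero hA
  -- `h` maps `ℤ^n` onto `ker (torusHom A) = D⁻¹ ℤ^n / ℤ^n`, with kernel `A ℤ^n`.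
  let h : (Fin n → ℤ) →+ Torus n :=
    (torusPi n).comp (D⁻¹.mulVecLin.toAddMonoidHom.comp (intCastVec n))
  have h_apply (m : Fin n → ℤ) : h m = torusPi n (D⁻¹ *ᵥ intCastVec n m) := rfl
  have hrange : h.range = (torusHom A).ker := by
    apply le_antisymm
    · rintro _ ⟨m, rfl⟩
      rw [AddMonoidHom.mem_ker, h_apply, torusHom_torusPi, torusPi_eq_zero_iff,
        ((inv_mulVec_eq_iff hD).1 rfl).symm, intLattice_eq_range]
      exact ⟨m, rfl⟩
    · intro p hp
      obtain ⟨x, rfl⟩ := QuotientAddGroup.mk'_surjective _ p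
      change torusHom A (torusPi n x) = 0 at hp
      rw [torusHom_torusPi, torusPi_eq_zero_iff, intLattice_eq_range] at hp
      obtain ⟨m, hm⟩ := hp
      exact ⟨m, by rw [h_apply, (inv_mulVec_eq_iff hD).2 hm]; rfl⟩
  have hker : h.ker = (LinearMap.range A.mulVecLin).toAddSubgroup := by
    ext m
    rw [AddMonoidHom.mem_ker, h_apply, torusPi_eq_zero_iff, intLattice_eq_range,
      Submodule.mem_toAddSubgroup, LinearMap.mem_range]
    refine exists_congr fun k => ?_
    rw [eq_comm, inv_mulVec_eq_iff hD, map_intCast_mulVec, mulVecLin_apply, eq_comm,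
      intCastVec_injective.eq_iff]
  rw [← hrange, ← Nat.card_congr (QuotientAddGroup.quotientKerEquivRange h).toEquiv, hker,
    ← A.index_range_mulVecLin hA]
  rfl

end Torus

/-- If `B` is an `n×n` integer matrix with `det(B − I) ≠ 0` and `v ∈ ℝ^n`, then the
affine map `f(π(x)) = π(Bx + v)` of `T^n` is well defined, its fixed-point set is
nonempty and finite, and it has exactly `|det(B − I)|` fixed points. -/
theorem stmt11 {n : ℕ} (B : Matrix (Fin n) (Fin n) ℤ)
    (hB : (B - 1).det ≠ 0) (v : Fin n → ℝ) :
    ∃ f : Torus n → Torus n,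
      (∀ x : Fin n → ℝ,
        f (torusPi n x) = torusPi n ((B.map (Int.cast : ℤ → ℝ)).mulVec x + v)) ∧
      {p : Torus n | f p = p}.Finite ∧
      {p : Torus n | f p = p}.Nonempty ∧
      {p : Torus n | f p = p}.ncard = (B - 1).det.natAbs := by
  set f : Torus n → Torus n := fun p => torusHom B p + torusPi n v
  have hfix : {p | f p = p} = torusHom (B - 1) ⁻¹' {-torusPi n v} := by
    ext p
    rw [Set.mem_preimage, Set.mem_singleton_iff, torusHom_sub_one, sub_eq_iff_eq_add,
      eq_neg_add_iff_add_eq, add_comm]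
    rfl
  have hcard : {p | f p = p}.ncard = (B - 1).det.natAbs := by
    rw [hfix, AddMonoidHom.ncard_preimage_singleton _ (torusHom_surjective hB _),
      natCard_ker_torusHom hB]
  have hne : {p | f p = p}.ncard ≠ 0 := hcard ▸ Int.natAbs_ne_zero.2 hB
  refine ⟨f, fun x => ?_, Set.finite_of_ncard_ne_zero hne, Set.nonempty_of_ncard_ne_zero hne,
    hcard⟩
  rw [map_add, ← torusHom_torusPi]
end
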